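/- (Student-t special case of the spectral score equations.) Let d ≥ 1, ν > 0, let W be a real d×d orthogonal matrix, fix an index i and fix positive values λ_k for k ≠ i, and let y ∈ ℝ^d. For f ∈ ℝ let Λ(f) have i-th diagonal entry e^f and k-th entry λ_k (k ≠ i), Σ(f) = W Λ(f) Wᵀ, Δ(f) = diag(Σ(f)), R(f) = Δ(f)^{-1/2} Σ(f) Δ(f)^{-1/2}. Then ℓ(f) = −(1/2) log det R(f) − ((d+ν)/2) log(ν + yᵀ R(f)^{-1} y) is differentiable in f with derivative ℓ'(f) = (1/2)(w·ỹ_i²/λ_i − 1) − (w·ỹᵀ Λ^{-1} ȳ_i − trace(Σ̇_i)), where λ_i = e^f, ỹ = Wᵀ Δ^{1/2} y with i-th component ỹ_i, w = (d+ν)/(ν + ỹᵀ Λ^{-1} ỹ), Σ̇_i = (1/2) λ_i diag(W_{1i}²/Σ_{11},…,W_{di}²/Σ_{dd}), and ȳ_i = Wᵀ Δ^{1/2} Σ̇_i y. -/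

import Mathlib

open Matrix

noncomputable def Sig {d : ℕ} (W : Matrix (Fin d) (Fin d) ℝ) (lam : Fin d → ℝ) :
    Matrix (Fin d) (Fin d) ℝ :=
  W * Matrix.diagonal lam * Wᵀ

noncomputable def Dhalf {d : ℕ} (W : Matrix (Fin d) (Fin d) ℝ) (lam : Fin d → ℝ) :
    Matrix (Fin d) (Fin d) ℝ :=
  Matrix.diagonal fun j => Real.sqrt (Sig W lam j j)

noncomputable def Rmat {d : ℕ} (W : Matrix (Fin d) (Fin d) ℝ) (lam : Fin d → ℝ) :
    Matrix (Fin d) (Fin d) ℝ :=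
  Matrix.diagonal (fun j => (Real.sqrt (Sig W lam j j))⁻¹) * Sig W lam *
    Matrix.diagonal (fun j => (Real.sqrt (Sig W lam j j))⁻¹)

noncomputable def Sdot {d : ℕ} (W : Matrix (Fin d) (Fin d) ℝ) (lam : Fin d → ℝ) (i : Fin d) :
    Matrix (Fin d) (Fin d) ℝ :=
  Matrix.diagonal fun j => (1 / 2) * lam i * (W j i) ^ 2 / Sig W lam j j

noncomputable def tilde {d : ℕ} (W : Matrix (Fin d) (Fin d) ℝ) (lam : Fin d → ℝ)
    (y : Fin d → ℝ) : Fin d → ℝ :=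
  (Wᵀ * Dhalf W lam) *ᵥ y

noncomputable def barv {d : ℕ} (W : Matrix (Fin d) (Fin d) ℝ) (lam : Fin d → ℝ) (i : Fin d)
    (y : Fin d → ℝ) : Fin d → ℝ :=
  (Wᵀ * Dhalf W lam * Sdot W lam i) *ᵥ y

noncomputable def tWeight {d : ℕ} (ν : ℝ) (W : Matrix (Fin d) (Fin d) ℝ) (lam : Fin d → ℝ)
    (y : Fin d → ℝ) : ℝ :=
  ((d : ℝ) + ν) / (ν + tilde W lam y ⬝ᵥ ((Matrix.diagonal lam)⁻¹ *ᵥ tilde W lam y))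

/-! ### Auxiliary lemmas -/

lemma sig_diag {d : ℕ} (W : Matrix (Fin d) (Fin d) ℝ) (μ : Fin d → ℝ) (j : Fin d) :
    Sig W μ j j = ∑ k, W j k ^ 2 * μ k := by
  rw [Sig, Matrix.mul_assoc]
  simp only [Matrix.mul_apply, Matrix.diagonal_apply, ite_mul, zero_mul,
    Finset.sum_ite_eq, Finset.mem_univ, if_true, Matrix.transpose_apply]
  exact Finset.sum_congr rfl fun k _ => by ring

lemma row_sq {d : ℕ} (W : Matrix (Fin d) (Fin d) ℝ) (hW : Wᵀ * W = 1) (j : Fin d) :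
    ∑ k, W j k ^ 2 = 1 := by
  have h := mul_eq_one_comm.mp hW
  have h2 := congrArg (fun M => M j j) h
  simpa [Matrix.mul_apply, sq, Matrix.one_apply] using h2

lemma sig_diag_pos {d : ℕ} (W : Matrix (Fin d) (Fin d) ℝ) (hW : Wᵀ * W = 1)
    (μ : Fin d → ℝ) (hμ : ∀ k, 0 < μ k) (j : Fin d) : 0 < Sig W μ j j := by
  rw [sig_diag]
  obtain ⟨k, hk⟩ : ∃ k, W j k ≠ 0 := by
    by_contra h
    push_neg at h
    have := row_sq W hW j
    simp [h] at this
  refine Finset.sum_pos' (fun k _ => mul_nonneg (sq_nonneg _) (hμ k).le)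
    ⟨k, Finset.mem_univ k, mul_pos (by positivity) (hμ k)⟩

section
variable {d : ℕ} (W : Matrix (Fin d) (Fin d) ℝ) (μ : Fin d → ℝ)

lemma log_det_R (hW : Wᵀ * W = 1) (hμ : ∀ k, 0 < μ k) :
    Real.log (Rmat W μ).det =
      (∑ k, Real.log (μ k)) - ∑ j, Real.log (Sig W μ j j) := by
  have hS : ∀ j, 0 < Sig W μ j j := sig_diag_pos W hW μ hμ
  have hdet : W.det * Wᵀ.det = 1 := by
    have h := congrArg Matrix.det hW
    rw [Matrix.det_mul, Matrix.det_one] at h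
    rw [mul_comm]; exact h
  have hdS : (Sig W μ).det = W.det * (∏ k, μ k) * Wᵀ.det := by
    rw [Sig, Matrix.det_mul, Matrix.det_mul, Matrix.det_diagonal]
  have key : (∏ j, (Real.sqrt (Sig W μ j j))⁻¹) * (∏ j, (Real.sqrt (Sig W μ j j))⁻¹)
      = ∏ j, (Sig W μ j j)⁻¹ := by
    rw [← Finset.prod_mul_distrib]
    exact Finset.prod_congr rfl fun j _ => by
      rw [← mul_inv, Real.mul_self_sqrt (hS j).le]
  have hdR : (Rmat W μ).det = (∏ k, μ k) * ∏ j, (Sig W μ j j)⁻¹ := by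
    rw [Rmat, Matrix.det_mul, Matrix.det_mul, Matrix.det_diagonal, hdS, ← key]
    linear_combination ((∏ j, (Real.sqrt (Sig W μ j j))⁻¹) *
      (∏ j, (Real.sqrt (Sig W μ j j))⁻¹) * (∏ k, μ k)) * hdet
  rw [hdR, Real.log_mul, Real.log_prod (fun k _ => (hμ k).ne'),
    Real.log_prod (fun j _ => (inv_pos.mpr (hS j)).ne')]
  · simp only [Real.log_inv]
    rw [Finset.sum_neg_distrib, sub_eq_add_neg]
  · exact (Finset.prod_pos (fun k _ => hμ k)).ne'
  · exact (Finset.prod_pos (fun j _ => inv_pos.mpr (hS j))).ne'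

lemma diag_mu_inv (hμ : ∀ k, 0 < μ k) :
    (Matrix.diagonal μ)⁻¹ = Matrix.diagonal (fun k => (μ k)⁻¹) := by
  apply Matrix.inv_eq_right_inv
  rw [Matrix.diagonal_mul_diagonal,
    show (fun i => μ i * (μ i)⁻¹) = fun _ => (1:ℝ) from funext fun k => mul_inv_cancel₀ (hμ k).ne',
    Matrix.diagonal_one]

lemma R_inv (hW : Wᵀ * W = 1) (hμ : ∀ k, 0 < μ k) :
    (Rmat W μ)⁻¹ = Dhalf W μ * (W * Matrix.diagonal (fun k => (μ k)⁻¹) * Wᵀ) * Dhalf W μ := by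
  have hS : ∀ j, 0 < Sig W μ j j := sig_diag_pos W hW μ hμ
  apply Matrix.inv_eq_right_inv
  have hWW : W * Wᵀ = 1 := mul_eq_one_comm.mp hW
  have hDD : Matrix.diagonal (fun j => (Real.sqrt (Sig W μ j j))⁻¹) * Dhalf W μ = 1 := by
    rw [Dhalf, Matrix.diagonal_mul_diagonal,
      show (fun i => (Real.sqrt (Sig W μ i i))⁻¹ * Real.sqrt (Sig W μ i i)) = fun _ => (1:ℝ) from
        funext fun j => inv_mul_cancel₀ (Real.sqrt_ne_zero'.mpr (hS j)), Matrix.diagonal_one]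
  have hμμ : Matrix.diagonal μ * Matrix.diagonal (fun k => (μ k)⁻¹) = 1 := by
    rw [Matrix.diagonal_mul_diagonal,
      show (fun i => μ i * (μ i)⁻¹) = fun _ => (1:ℝ) from
        funext fun k => mul_inv_cancel₀ (hμ k).ne', Matrix.diagonal_one]
  have hSM : Sig W μ * (W * Matrix.diagonal (fun k => (μ k)⁻¹) * Wᵀ) = 1 := by
    calc Sig W μ * (W * Matrix.diagonal (fun k => (μ k)⁻¹) * Wᵀ)
        = W * Matrix.diagonal μ * (Wᵀ * W) * Matrix.diagonal (fun k => (μ k)⁻¹) * Wᵀ := by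
          rw [Sig]; noncomm_ring
      _ = W * (Matrix.diagonal μ * Matrix.diagonal (fun k => (μ k)⁻¹)) * Wᵀ := by
          rw [hW, Matrix.mul_one]; noncomm_ring
      _ = 1 := by rw [hμμ, Matrix.mul_one, hWW]
  calc Rmat W μ * (Dhalf W μ * (W * Matrix.diagonal (fun k => (μ k)⁻¹) * Wᵀ) * Dhalf W μ)
      = Matrix.diagonal (fun j => (Real.sqrt (Sig W μ j j))⁻¹) * Sig W μ *
          ((Matrix.diagonal (fun j => (Real.sqrt (Sig W μ j j))⁻¹) * Dhalf W μ) *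
            ((W * Matrix.diagonal (fun k => (μ k)⁻¹) * Wᵀ) * Dhalf W μ)) := by
        rw [Rmat]; noncomm_ring
    _ = Matrix.diagonal (fun j => (Real.sqrt (Sig W μ j j))⁻¹) *
          (Sig W μ * (W * Matrix.diagonal (fun k => (μ k)⁻¹) * Wᵀ)) * Dhalf W μ := by
        rw [hDD, Matrix.one_mul]; noncomm_ring
    _ = 1 := by rw [hSM, Matrix.mul_one, hDD]

lemma quad_form (hW : Wᵀ * W = 1) (hμ : ∀ k, 0 < μ k) (y : Fin d → ℝ) :
    y ⬝ᵥ ((Rmat W μ)⁻¹ *ᵥ y) = ∑ k, (tilde W μ y k) ^ 2 * (μ k)⁻¹ := by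
  rw [R_inv W μ hW hμ]
  have hA : Dhalf W μ * (W * Matrix.diagonal (fun k => (μ k)⁻¹) * Wᵀ) * Dhalf W μ
      = (Wᵀ * Dhalf W μ)ᵀ * Matrix.diagonal (fun k => (μ k)⁻¹) * (Wᵀ * Dhalf W μ) := by
    rw [Matrix.transpose_mul, Matrix.transpose_transpose, Dhalf, Matrix.diagonal_transpose]
    noncomm_ring
  rw [hA, Matrix.mul_assoc, ← Matrix.mulVec_mulVec, ← Matrix.mulVec_mulVec,
    dotProduct_mulVec, Matrix.vecMul_transpose]
  rw [show (Wᵀ * Dhalf W μ) *ᵥ y = tilde W μ y from rfl]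
  simp only [Matrix.mulVec_diagonal, dotProduct]
  exact Finset.sum_congr rfl fun k _ => by ring

end

section
variable {d : ℕ} (W : Matrix (Fin d) (Fin d) ℝ) (μ : Fin d → ℝ) (y : Fin d → ℝ) (i : Fin d)

lemma tilde_apply (k : Fin d) :
    tilde W μ y k = ∑ j, W j k * Real.sqrt (Sig W μ j j) * y j := by
  simp only [tilde, Matrix.mulVec, dotProduct, Matrix.mul_apply, Dhalf,
    Matrix.diagonal_apply, Matrix.transpose_apply, mul_ite, mul_zero,
    Finset.sum_ite_eq, Finset.sum_ite_eq', Finset.mem_univ, if_true]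

lemma barv_apply (k : Fin d) :
    barv W μ i y k =
      ∑ j, W j k * (Real.sqrt (Sig W μ j j) * ((1 / 2) * μ i * (W j i) ^ 2 / Sig W μ j j)) * y j := by
  simp only [barv, Matrix.mulVec, dotProduct, Matrix.mul_apply, Dhalf, Sdot,
    Matrix.diagonal_apply, Matrix.transpose_apply, mul_ite, mul_zero, ite_mul, zero_mul,
    Finset.sum_ite_eq, Finset.sum_ite_eq', Finset.mem_univ, if_true]
  exact Finset.sum_congr rfl fun j _ => by ring

lemma sdot_trace :
    (Sdot W μ i).trace = ∑ j, (1 / 2) * μ i * (W j i) ^ 2 / Sig W μ j j := by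
  rw [Sdot, Matrix.trace_diagonal]

lemma diag_dot (v x z : Fin d → ℝ) :
    x ⬝ᵥ (Matrix.diagonal v *ᵥ z) = ∑ k, x k * v k * z k := by
  simp only [dotProduct, Matrix.mulVec_diagonal]
  exact Finset.sum_congr rfl fun k _ => by ring

lemma tWeight_eq (ν : ℝ) (hμ : ∀ k, 0 < μ k) :
    tWeight ν W μ y = ((d : ℝ) + ν) / (ν + ∑ k, (tilde W μ y k) ^ 2 * (μ k)⁻¹) := by
  rw [tWeight, diag_mu_inv μ hμ, diag_dot]
  congr 2
  exact Finset.sum_congr rfl fun k _ => by ring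

end

section
variable {d : ℕ} (W : Matrix (Fin d) (Fin d) ℝ) (lam : Fin d → ℝ) (i : Fin d)

noncomputable def cc (j : Fin d) : ℝ := ∑ m ∈ Finset.univ.erase i, W j m ^ 2 * lam m
noncomputable def bb (j : Fin d) : ℝ := W j i ^ 2

lemma sig_update (g : ℝ) (j : Fin d) :
    Sig W (Function.update lam i (Real.exp g)) j j = cc W lam i j + bb W i j * Real.exp g := by
  rw [sig_diag, ← Finset.add_sum_erase Finset.univ _ (Finset.mem_univ i),
    Function.update_self, add_comm, cc, bb]
  congr 1
  exact Finset.sum_congr rfl fun k hk => by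
    rw [Function.update_of_ne (Finset.ne_of_mem_erase hk)]

lemma update_pos (hlam : ∀ k, k ≠ i → 0 < lam k) (g : ℝ) (k : Fin d) :
    0 < Function.update lam i (Real.exp g) k := by
  rcases eq_or_ne k i with rfl | h
  · rw [Function.update_self]; exact Real.exp_pos g
  · rw [Function.update_of_ne h]; exact hlam k h

lemma logsum_update (g : ℝ) :
    ∑ k, Real.log (Function.update lam i (Real.exp g) k)
      = g + ∑ k ∈ Finset.univ.erase i, Real.log (lam k) := by
  rw [← Finset.add_sum_erase Finset.univ _ (Finset.mem_univ i), Function.update_self,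
    Real.log_exp]
  congr 1
  exact Finset.sum_congr rfl fun k hk => by
    rw [Function.update_of_ne (Finset.ne_of_mem_erase hk)]

variable (y : Fin d → ℝ)

/-- The tilde vector as an explicit scalar function of `g`. -/
noncomputable def Tf (k : Fin d) (g : ℝ) : ℝ :=
  ∑ j, W j k * Real.sqrt (cc W lam i j + bb W i j * Real.exp g) * y j

/-- Derivative of `Tf k` at `f`. -/
noncomputable def Df (f : ℝ) (k : Fin d) : ℝ :=
  ∑ j, W j k * (bb W i j * Real.exp f / (2 * Real.sqrt (cc W lam i j + bb W i j * Real.exp f))) * y j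

/-- The quadratic form as an explicit scalar function of `g`. -/
noncomputable def Qf (g : ℝ) : ℝ :=
  (Tf W lam i y i g) ^ 2 * (Real.exp g)⁻¹ +
    ∑ k ∈ Finset.univ.erase i, (Tf W lam i y k g) ^ 2 * (lam k)⁻¹

lemma tilde_eq_T (g : ℝ) (k : Fin d) :
    tilde W (Function.update lam i (Real.exp g)) y k = Tf W lam i y k g := by
  rw [tilde_apply, Tf]
  exact Finset.sum_congr rfl fun j _ => by rw [sig_update]

lemma qsum_eq (g : ℝ) :
    ∑ k, (tilde W (Function.update lam i (Real.exp g)) y k) ^ 2 *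
        ((Function.update lam i (Real.exp g)) k)⁻¹ = Qf W lam i y g := by
  rw [← Finset.add_sum_erase Finset.univ _ (Finset.mem_univ i), Qf]
  congr 1
  · rw [tilde_eq_T, Function.update_self]
  · exact Finset.sum_congr rfl fun k hk => by
      rw [tilde_eq_T, Function.update_of_ne (Finset.ne_of_mem_erase hk)]

end

lemma sqrt_div_trick {S e b : ℝ} (hS : 0 < S) :
    Real.sqrt S * ((1 / 2) * e * b / S) = b * e / (2 * Real.sqrt S) := by
  have h1 : Real.sqrt S ≠ 0 := (Real.sqrt_pos.mpr hS).ne'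
  have h2 : Real.sqrt S ^ 2 = S := Real.sq_sqrt hS.le
  field_simp
  linear_combination e * b * h2

/-- Student-t special case of the spectral score equations: with the `i`-th
eigenvalue parameterized as `λ_i = e^f` (others fixed), the Student-t log-likelihood term
`ℓ(f) = −(1/2) log det R(f) − ((d+ν)/2) log(ν + yᵀ R(f)⁻¹ y)` is differentiable with
`ℓ'(f) = (1/2)(w·ỹ_i²/λ_i − 1) − (w·ỹᵀ Λ⁻¹ ȳ_i − trace(Σ̇_i))`. -/
theorem student_t_spectral_score {d : ℕ} (hd : 1 ≤ d) (ν : ℝ) (hν : 0 < ν)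
    (W : Matrix (Fin d) (Fin d) ℝ) (hW : Wᵀ * W = 1)
    (i : Fin d) (lam : Fin d → ℝ) (hlam : ∀ k, k ≠ i → 0 < lam k)
    (y : Fin d → ℝ) (f : ℝ) :
    HasDerivAt
      (fun g : ℝ =>
        -(1 / 2) * Real.log (Rmat W (Function.update lam i (Real.exp g))).det
          - (((d : ℝ) + ν) / 2) *
              Real.log (ν + y ⬝ᵥ ((Rmat W (Function.update lam i (Real.exp g)))⁻¹ *ᵥ y)))
      ((1 / 2) * (tWeight ν W (Function.update lam i (Real.exp f)) y *
            (tilde W (Function.update lam i (Real.exp f)) y i) ^ 2 / Real.exp f - 1)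
        - (tWeight ν W (Function.update lam i (Real.exp f)) y *
              (tilde W (Function.update lam i (Real.exp f)) y ⬝ᵥ
                ((Matrix.diagonal (Function.update lam i (Real.exp f)))⁻¹ *ᵥ
                  barv W (Function.update lam i (Real.exp f)) i y))
            - (Sdot W (Function.update lam i (Real.exp f)) i).trace)) f := by
  have hμ : ∀ g : ℝ, ∀ k, 0 < Function.update lam i (Real.exp g) k :=
    fun g k => update_pos lam i hlam g k
  have hSpos : ∀ (g : ℝ) (j : Fin d), 0 < cc W lam i j + bb W i j * Real.exp g := fun g j => by
    rw [← sig_update]; exact sig_diag_pos W hW _ (hμ g) j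
  have hQ0 : ∀ g, 0 ≤ Qf W lam i y g := fun g => by
    refine add_nonneg (mul_nonneg (sq_nonneg _) (inv_nonneg.mpr (Real.exp_pos g).le)) ?_
    exact Finset.sum_nonneg fun k hk => mul_nonneg (sq_nonneg _)
      (inv_nonneg.mpr (hlam k (Finset.ne_of_mem_erase hk)).le)
  have hP : ∀ g, 0 < ν + Qf W lam i y g := fun g => add_pos_of_pos_of_nonneg hν (hQ0 g)
  -- rewrite the function into explicit scalar form
  have hfun : (fun g : ℝ =>
        -(1 / 2) * Real.log (Rmat W (Function.update lam i (Real.exp g))).det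
          - (((d : ℝ) + ν) / 2) *
              Real.log (ν + y ⬝ᵥ ((Rmat W (Function.update lam i (Real.exp g)))⁻¹ *ᵥ y)))
      = fun g : ℝ =>
        -(1 / 2) * ((g + ∑ k ∈ Finset.univ.erase i, Real.log (lam k))
            - ∑ j, Real.log (cc W lam i j + bb W i j * Real.exp g))
          - (((d : ℝ) + ν) / 2) * Real.log (ν + Qf W lam i y g) := by
    funext g
    rw [log_det_R W _ hW (hμ g), quad_form W _ hW (hμ g) y, qsum_eq W lam i y g,
      logsum_update lam i g,
      show (∑ j, Real.log (Sig W (Function.update lam i (Real.exp g)) j j))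
          = ∑ j, Real.log (cc W lam i j + bb W i j * Real.exp g) from
        Finset.sum_congr rfl fun j _ => by rw [sig_update]]
  rw [hfun]
  -- derivatives of the pieces
  have hSder : ∀ j : Fin d, HasDerivAt (fun g => cc W lam i j + bb W i j * Real.exp g)
      (bb W i j * Real.exp f) f :=
    fun j => ((Real.hasDerivAt_exp f).const_mul (bb W i j)).const_add (cc W lam i j)
  have hA : HasDerivAt (fun g : ℝ => g + ∑ k ∈ Finset.univ.erase i, Real.log (lam k)) 1 f :=
    (hasDerivAt_id f).add_const _
  have hB : HasDerivAt (fun g => ∑ j, Real.log (cc W lam i j + bb W i j * Real.exp g))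
      (∑ j, bb W i j * Real.exp f / (cc W lam i j + bb W i j * Real.exp f)) f :=
    HasDerivAt.fun_sum fun j _ => (hSder j).log (hSpos f j).ne'
  have hT : ∀ k, HasDerivAt (fun g => Tf W lam i y k g) (Df W lam i y f k) f := by
    intro k
    unfold Tf Df
    exact HasDerivAt.fun_sum fun j _ =>
      (((hSder j).sqrt (hSpos f j).ne').const_mul (W j k)).mul_const (y j)
  have hQ1 : HasDerivAt (fun g => (Tf W lam i y i g) ^ 2 * (Real.exp g)⁻¹)
      (2 * Tf W lam i y i f * Df W lam i y f i * (Real.exp f)⁻¹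
        - (Tf W lam i y i f) ^ 2 * (Real.exp f)⁻¹) f := by
    have h := ((hT i).fun_pow 2).fun_mul ((Real.hasDerivAt_exp f).fun_inv (Real.exp_ne_zero f))
    refine h.congr_deriv ?_
    have he : Real.exp f ≠ 0 := Real.exp_ne_zero f
    field_simp
    ring
  have hQ2 : HasDerivAt (fun g => ∑ k ∈ Finset.univ.erase i, (Tf W lam i y k g) ^ 2 * (lam k)⁻¹)
      (∑ k ∈ Finset.univ.erase i, 2 * Tf W lam i y k f * Df W lam i y f k * (lam k)⁻¹) f := by
    refine HasDerivAt.fun_sum fun k _ => ?_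
    have h := ((hT k).fun_pow 2).mul_const ((lam k)⁻¹)
    refine h.congr_deriv ?_
    push_cast
    ring
  have hQder : HasDerivAt (fun g => Qf W lam i y g)
      ((2 * Tf W lam i y i f * Df W lam i y f i * (Real.exp f)⁻¹
          - (Tf W lam i y i f) ^ 2 * (Real.exp f)⁻¹)
        + ∑ k ∈ Finset.univ.erase i, 2 * Tf W lam i y k f * Df W lam i y f k * (lam k)⁻¹) f := by
    unfold Qf
    exact hQ1.add hQ2
  have hlog : HasDerivAt (fun g => Real.log (ν + Qf W lam i y g))
      (((2 * Tf W lam i y i f * Df W lam i y f i * (Real.exp f)⁻¹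
          - (Tf W lam i y i f) ^ 2 * (Real.exp f)⁻¹)
        + ∑ k ∈ Finset.univ.erase i, 2 * Tf W lam i y k f * Df W lam i y f k * (lam k)⁻¹)
        / (ν + Qf W lam i y f)) f :=
    (hQder.const_add ν).log (hP f).ne'
  have hTot := ((hA.sub hB).const_mul (-(1 / 2))).sub (hlog.const_mul (((d : ℝ) + ν) / 2))
  -- now identify the derivative values
  have hbarv : ∀ k, barv W (Function.update lam i (Real.exp f)) i y k = Df W lam i y f k := by
    intro k
    rw [barv_apply, Df]
    refine Finset.sum_congr rfl fun j _ => ?_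
    rw [sig_update, Function.update_self, sqrt_div_trick (hSpos f j), bb]
  have hdot : tilde W (Function.update lam i (Real.exp f)) y ⬝ᵥ
        ((Matrix.diagonal (Function.update lam i (Real.exp f)))⁻¹ *ᵥ
          barv W (Function.update lam i (Real.exp f)) i y)
      = Tf W lam i y i f * (Real.exp f)⁻¹ * Df W lam i y f i
        + ∑ k ∈ Finset.univ.erase i, Tf W lam i y k f * (lam k)⁻¹ * Df W lam i y f k := by
    rw [diag_mu_inv _ (hμ f), diag_dot, ← Finset.add_sum_erase Finset.univ _ (Finset.mem_univ i)]
    congr 1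
    · rw [tilde_eq_T, Function.update_self, hbarv i]
    · exact Finset.sum_congr rfl fun k hk => by
        rw [tilde_eq_T, Function.update_of_ne (Finset.ne_of_mem_erase hk), hbarv k]
  have htr : (Sdot W (Function.update lam i (Real.exp f)) i).trace
      = (1 / 2) * ∑ j, bb W i j * Real.exp f / (cc W lam i j + bb W i j * Real.exp f) := by
    rw [sdot_trace, Finset.mul_sum]
    refine Finset.sum_congr rfl fun j _ => ?_
    rw [sig_update, Function.update_self, bb]
    ring
  have hw : tWeight ν W (Function.update lam i (Real.exp f)) y
      = ((d : ℝ) + ν) / (ν + Qf W lam i y f) := by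
    rw [tWeight_eq W _ y ν (hμ f), qsum_eq W lam i y f]
  have hveq : ((1 / 2) * (tWeight ν W (Function.update lam i (Real.exp f)) y *
            (tilde W (Function.update lam i (Real.exp f)) y i) ^ 2 / Real.exp f - 1)
        - (tWeight ν W (Function.update lam i (Real.exp f)) y *
              (tilde W (Function.update lam i (Real.exp f)) y ⬝ᵥ
                ((Matrix.diagonal (Function.update lam i (Real.exp f)))⁻¹ *ᵥ
                  barv W (Function.update lam i (Real.exp f)) i y))
            - (Sdot W (Function.update lam i (Real.exp f)) i).trace))
      = -(1 / 2) * (1 - ∑ j, bb W i j * Real.exp f / (cc W lam i j + bb W i j * Real.exp f))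
        - ((d : ℝ) + ν) / 2 *
          (((2 * Tf W lam i y i f * Df W lam i y f i * (Real.exp f)⁻¹
              - (Tf W lam i y i f) ^ 2 * (Real.exp f)⁻¹)
            + ∑ k ∈ Finset.univ.erase i, 2 * Tf W lam i y k f * Df W lam i y f k * (lam k)⁻¹)
            / (ν + Qf W lam i y f)) := by
    rw [hw, hdot, htr, tilde_eq_T,
      show (∑ k ∈ Finset.univ.erase i, 2 * Tf W lam i y k f * Df W lam i y f k * (lam k)⁻¹)
          = 2 * ∑ k ∈ Finset.univ.erase i, Tf W lam i y k f * (lam k)⁻¹ * Df W lam i y f k by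
        rw [Finset.mul_sum]; exact Finset.sum_congr rfl fun k _ => by ring]
    have hPne : ν + Qf W lam i y f ≠ 0 := (hP f).ne'
    have he : Real.exp f ≠ 0 := Real.exp_ne_zero f
    field_simp
    ring
  rw [hveq]
  exact hTot
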